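/- arXiv:2603.04603 — 4 statements merged into one kernel-verified Lean document; each statement's English description precedes it below -/
import Mathlib

section
/- The relation ≲_R induced by a rulebook on the set of realizations is transitive, hence a preorder. -/
/-- A rulebook: a (finite, via `Fintype ι`) family of rules `Ξ → ℝ≥0`
together with a preorder on the rule index set. -/
structure Rulebook (ι Ξ : Type*) where
  rule : ι → Ξ → NNReal
  le : ι → ι → Prop
  le_refl : ∀ i, le i i
  le_trans : ∀ i j k, le i j → le j k → le i k

/-- Strict priority: `r < r'` iff `r ≲ r'` and not `r' ≲ r`. -/
def Rulebook.ltRule {ι Ξ : Type*} (R : Rulebook ι Ξ) (i j : ι) : Prop :=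
  R.le i j ∧ ¬ R.le j i

/-- Induced relation on realizations: `x ≲_R y` iff for every rule `r` with
`r x > r y` there is a strictly higher-priority rule `r'` with `r' x < r' y`. -/
def Rulebook.leR {ι Ξ : Type*} (R : Rulebook ι Ξ) (x y : Ξ) : Prop :=
  ∀ i, R.rule i y < R.rule i x → ∃ j, R.ltRule i j ∧ R.rule j x < R.rule j y

/-- Strictly better: `x <_R y` iff `x ≲_R y` and not `y ≲_R x`. -/
def Rulebook.ltR {ι Ξ : Type*} (R : Rulebook ι Ξ) (x y : Ξ) : Prop :=
  R.leR x y ∧ ¬ R.leR y x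

lemma ltRule_trans {ι Ξ : Type*} (R : Rulebook ι Ξ) {a b c : ι}
    (h1 : R.ltRule a b) (h2 : R.ltRule b c) : R.ltRule a c := by
  refine ⟨R.le_trans _ _ _ h1.1 h2.1, fun h => h2.2 (R.le_trans _ _ _ h h1.1)⟩

theorem leR_trans {ι Ξ : Type*} [Fintype ι] (R : Rulebook ι Ξ) (x y z : Ξ)
    (hxy : R.leR x y) (hyz : R.leR y z) : R.leR x z := by
  have hwf : WellFounded (fun j i => R.ltRule i j) := by
    have ht : IsTrans ι (fun j i => R.ltRule i j) :=
      ⟨fun a b c h1 h2 => ltRule_trans R h2 h1⟩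
    have hi : IsIrrefl ι (fun j i => R.ltRule i j) := ⟨fun a h => h.2 h.1⟩
    exact Finite.wellFounded_of_trans_of_irrefl _
  have key : ∀ i : ι,
      ((R.rule i x > R.rule i y ∨ R.rule i y > R.rule i z) ∧ R.rule i z ≤ R.rule i x) →
      ∃ j, R.ltRule i j ∧ R.rule j x < R.rule j z := by
    intro i
    induction i using hwf.induction with
    | _ i IH =>
      rintro ⟨hcase, hzx⟩
      rcases hcase with h1 | h2
      · obtain ⟨j, hij, hxyj⟩ := hxy i h1
        by_cases hj : R.rule j x < R.rule j z
        · exact ⟨j, hij, hj⟩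
        · push_neg at hj
          obtain ⟨k, hjk, hk⟩ := IH j hij ⟨Or.inr (lt_of_le_of_lt hj hxyj), hj⟩
          exact ⟨k, ltRule_trans R hij hjk, hk⟩
      · obtain ⟨j, hij, hyzj⟩ := hyz i h2
        by_cases hj : R.rule j x < R.rule j z
        · exact ⟨j, hij, hj⟩
        · push_neg at hj
          obtain ⟨k, hjk, hk⟩ := IH j hij ⟨Or.inl (lt_of_lt_of_le hyzj hj), hj⟩
          exact ⟨k, ltRule_trans R hij hjk, hk⟩
  intro i hi
  apply key i
  rcases lt_or_ge (R.rule i y) (R.rule i x) with h | h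
  · exact ⟨Or.inl h, hi.le⟩
  · exact ⟨Or.inr (lt_of_lt_of_le hi h), hi.le⟩
end

section
/- For a rulebook R on a set of realizations, x ≲_R y and y ≲_R x hold simultaneously if and only if r(x) = r(y) for every rule r in R. -/
theorem leR_antisymm_iff {ι Ξ : Type*} [Fintype ι] (R : Rulebook ι Ξ) (x y : Ξ) :
    (R.leR x y ∧ R.leR y x) ↔ ∀ i, R.rule i x = R.rule i y := by
  constructor
  · rintro ⟨hxy, hyx⟩
    by_contra h
    push_neg at h
    -- the set of disagreeing rules is nonempty
    have htrans : Transitive (fun i j => R.ltRule j i) := by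
      rintro a b c ⟨hba, hnab⟩ ⟨hcb, hnbc⟩
      exact ⟨R.le_trans _ _ _ hcb hba, fun hac => hnab (R.le_trans _ _ _ hac hcb)⟩
    have hirr : ∀ a, ¬ (fun i j => R.ltRule j i) a a := by
      rintro a ⟨h1, h2⟩; exact h2 h1
    haveI : IsTrans ι (fun i j => R.ltRule j i) := ⟨fun _ _ _ h1 h2 => htrans h1 h2⟩
    haveI : IsIrrefl ι (fun i j => R.ltRule j i) := ⟨hirr⟩
    have hwf : WellFounded (fun i j : ι => R.ltRule j i) :=
      Finite.wellFounded_of_trans_of_irrefl _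
    obtain ⟨i, hi, hmax⟩ := hwf.has_min {i | R.rule i x ≠ R.rule i y} h
    rcases lt_or_gt_of_ne hi with hlt | hlt
    · obtain ⟨j, hij, hj⟩ := hyx i hlt
      exact hmax j (ne_of_gt hj) hij
    · obtain ⟨j, hij, hj⟩ := hxy i hlt
      exact hmax j (ne_of_lt hj) hij
  · intro h
    constructor <;> intro i hi <;> rw [h i] at hi <;> exact absurd hi (lt_irrefl _)
end

section
/- If a safe trajectory exists, then a trajectory is safe if and only if it is optimal. -/
/-- A trajectory is safe iff every (risk-aware) rule evaluates to `0` on it. -/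
def Rulebook.Safe {ι T : Type*} (R : Rulebook ι T) (τ : T) : Prop :=
  ∀ i, R.rule i τ = 0

/-- A trajectory is optimal iff no trajectory is strictly better. -/
def Rulebook.Optimal {ι T : Type*} (R : Rulebook ι T) (τ : T) : Prop :=
  ¬ ∃ τ', R.ltR τ' τ

theorem safe_iff_optimal {ι T : Type*} [Fintype ι] (R : Rulebook ι T)
    (hex : ∃ τ, R.Safe τ) (τ : T) : R.Safe τ ↔ R.Optimal τ := by
  obtain ⟨σ, hσ⟩ := hex
  constructor
  · intro hs ⟨τ', hlt⟩
    exact hlt.2 (fun i hi => absurd (hs i ▸ hi) (by simp))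
  · intro hopt i
    by_contra hne
    have hpos : (0 : NNReal) < R.rule i τ := pos_iff_ne_zero.mpr hne
    exact hopt ⟨σ, fun j hj => absurd (hσ j ▸ hj) (by simp),
      fun h => by
        obtain ⟨j, _, hj⟩ := h i (hσ i ▸ hpos)
        exact absurd (hσ j ▸ hj) (by simp)⟩
end

section
/- Rational-tradeoff property of optimal trajectories: let τ* be optimal for a risk-aware rulebook whose risk measures are monotone. If a trajectory τ' satisfies r'_risk(τ') < r'_risk(τ*) for some rule r', then there exists a rule r* that is not strictly lower priority than r' such that Pr(r*_{τ'} > r*_{τ*}) > 0. -/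
open MeasureTheory

/-- Strict priority derived from a preorder `le` on rules. -/
def ltRel {ι : Type*} (le : ι → ι → Prop) (i j : ι) : Prop :=
  le i j ∧ ¬ le j i

/-- Induced relation on trajectories from the risk-aware rule values:
`τ ≲ τ'` iff for every rule `i` with `risk i τ > risk i τ'` there is a strictly
higher-priority rule `j` with `risk j τ' > risk j τ`. -/
def leTraj {ι T : Type*} (le : ι → ι → Prop) (risk : ι → T → ℝ) (τ τ' : T) : Prop :=
  ∀ i, risk i τ' < risk i τ → ∃ j, ltRel le i j ∧ risk j τ < risk j τ'

def ltTraj {ι T : Type*} (le : ι → ι → Prop) (risk : ι → T → ℝ) (τ τ' : T) : Prop :=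
  leTraj le risk τ τ' ∧ ¬ leTraj le risk τ' τ

def OptimalTraj {ι T : Type*} (le : ι → ι → Prop) (risk : ι → T → ℝ) (τStar : T) : Prop :=
  ¬ ∃ τ, ltTraj le risk τ τStar

theorem rational_tradeoff {Ω ι T : Type*} [MeasurableSpace Ω]
    (μ : Measure Ω) [IsProbabilityMeasure μ] [Fintype ι]
    (le : ι → ι → Prop) (hrefl : ∀ i, le i i)
    (htrans : ∀ i j k, le i j → le j k → le i k)
    (rVal : ι → T → Ω → ℝ)
    (hmeas : ∀ i τ, Measurable (rVal i τ))
    (hnonneg : ∀ i τ ω, 0 ≤ rVal i τ ω)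
    (ρ : ι → (Ω → ℝ) → ℝ)
    (hmono : ∀ i (f f' : Ω → ℝ), (∀ᵐ ω ∂μ, f ω ≤ f' ω) → ρ i f ≤ ρ i f')
    (γ : ι → ℝ)
    (risk : ι → T → ℝ)
    (hrisk : ∀ i τ, risk i τ = max (ρ i (rVal i τ) - γ i) 0)
    (τStar : T) (hopt : OptimalTraj le risk τStar)
    (τ' : T) (r' : ι) (h : risk r' τ' < risk r' τStar) :
    ∃ rStar : ι, ¬ ltRel le rStar r' ∧
      0 < μ {ω | rVal rStar τStar ω < rVal rStar τ' ω} := by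
  -- First find rStar with ¬ltRel le rStar r' and risk rStar τStar < risk rStar τ'
  have key : ∃ rStar : ι, ¬ ltRel le rStar r' ∧ risk rStar τStar < risk rStar τ' := by
    by_contra hc
    push_neg at hc
    have hc' : ∀ i, risk i τStar < risk i τ' → ltRel le i r' :=
      fun i hi => by_contra fun hn => absurd hi (not_lt.mpr (hc i hn))
    apply hopt
    refine ⟨τ', ?_, ?_⟩
    · intro i hi
      exact ⟨r', hc' i hi, h⟩
    · intro hle
      obtain ⟨j, hj1, hj2⟩ := hle r' h
      exact hj1.2 (hc' j hj2).1
  obtain ⟨rStar, h1, h2⟩ := key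
  refine ⟨rStar, h1, ?_⟩
  rw [pos_iff_ne_zero]
  intro hz
  have hae : ∀ᵐ ω ∂μ, rVal rStar τ' ω ≤ rVal rStar τStar ω := by
    rw [ae_iff]
    convert hz using 2
    ext ω
    simp [not_le]
  have := hmono rStar _ _ hae
  have hr : risk rStar τ' ≤ risk rStar τStar := by
    rw [hrisk, hrisk]
    exact max_le_max (by linarith) le_rfl
  linarith
end
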